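/- arXiv:2508.12826 — 5 statements merged into one kernel-verified Lean document; each statement's English description precedes it below -/
import Mathlib

section
/- Let G be a graph on n vertices with minimum degree δ(G) ≥ 5n/9, let u_0v_0 be an edge of G, let k ≥ 2 be an integer, and let R ⊆ V(G) \ {u_0, v_0} be a set of vertices with |R| + 2k + 1 ≤ n/9. Then the graph G − R contains a cycle of length 2k+1 passing through the edge u_0v_0. -/
/-! Every vertex has at least `5n/9 > |R| + 2k` neighbours, and any two vertices have at least
`2 · 5n/9 - n = n/9 > |R| + 2k` common neighbours. So a path of length `2k - 2` starting at `v₀`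
and avoiding `R ∪ {u₀}` can be grown greedily, and it closes into the required cycle
through a common neighbour of its last vertex and `u₀`, followed by the edge `u₀v₀`. -/

open SimpleGraph

/-- The join `G ∇ H` of two graphs: disjoint union together with all cross edges. -/
def graphJoin {α β : Type} (G : SimpleGraph α) (H : SimpleGraph β) :
    SimpleGraph (α ⊕ β) :=
  SimpleGraph.fromRel (fun x y =>
    (∃ a b, x = Sum.inl a ∧ y = Sum.inr b) ∨
    (∃ a b, x = Sum.inl a ∧ y = Sum.inl b ∧ G.Adj a b) ∨
    (∃ a b, x = Sum.inr a ∧ y = Sum.inr b ∧ H.Adj a b))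

/-- The disjoint union `G ∪ H` of two graphs. -/
def graphDisjUnion {α β : Type} (G : SimpleGraph α) (H : SimpleGraph β) :
    SimpleGraph (α ⊕ β) :=
  SimpleGraph.fromRel (fun x y =>
    (∃ a b, x = Sum.inl a ∧ y = Sum.inl b ∧ G.Adj a b) ∨
    (∃ a b, x = Sum.inr a ∧ y = Sum.inr b ∧ H.Adj a b))

/-- The matching `M_m` consisting of `m` pairwise disjoint edges. -/
def matchingGraph (m : ℕ) : SimpleGraph (Fin (2 * m)) :=
  SimpleGraph.fromRel (fun x y => (x : ℕ) / 2 = (y : ℕ) / 2)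

/-- The star `S_m` on `m` vertices, with centre `0`. -/
def starGraph (m : ℕ) : SimpleGraph (Fin m) :=
  SimpleGraph.fromRel (fun x _ => (x : ℕ) = 0)

/-- `G` contains a (not necessarily induced) copy of `H` as a subgraph. -/
def ContainsCopy {α β : Type} (H : SimpleGraph α) (G : SimpleGraph β) : Prop :=
  ∃ f : α ↪ β, ∀ ⦃a b : α⦄, H.Adj a b → G.Adj (f a) (f b)

/-- `G` is `H`-free: it contains no subgraph isomorphic to `H`. -/
def IsFreeOf {α β : Type} (H : SimpleGraph α) (G : SimpleGraph β) : Prop :=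
  ¬ ContainsCopy H G

/-- The number of edges of a graph. -/
noncomputable def eCount {α : Type} (G : SimpleGraph α) : ℕ :=
  Nat.card G.edgeSet

/-- `G ∈ EX(n, H)`: `G` is an `n`-vertex `H`-free graph with the maximum possible
number of edges among all `n`-vertex `H`-free graphs. -/
def IsExtremalFree {α : Type} (H : SimpleGraph α) (n : ℕ) (G : SimpleGraph (Fin n)) : Prop :=
  IsFreeOf H G ∧ ∀ G' : SimpleGraph (Fin n), IsFreeOf H G' → eCount G' ≤ eCount G

/-- The Turán number `ex(n, H)`. -/
noncomputable def exNum {α : Type} (n : ℕ) (H : SimpleGraph α) : ℕ :=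
  sSup {m | ∃ G : SimpleGraph (Fin n), IsFreeOf H G ∧ eCount G = m}

/-- `Fo` is an odd-ballooning of `F` in which every substituted odd cycle has length
at least five: every edge `uv` of `F` is replaced by an odd cycle through `u` and `v`
(consisting of the edge `f u f v` together with a path of even length at least four
joining `f v` to `f u`), all new vertices of different substituted cycles being distinct. -/
def IsOddBallooning {α β : Type} (F : SimpleGraph α) (Fo : SimpleGraph β) : Prop :=
  ∃ (f : α ↪ β) (P : ∀ u v : α, F.Adj u v → Fo.Walk (f v) (f u)),
    (∀ u v : α, F.Adj u v → Fo.Adj (f u) (f v)) ∧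
    (∀ u v : α, ∀ h : F.Adj u v, (P u v h).IsPath) ∧
    (∀ u v : α, ∀ h : F.Adj u v, 4 ≤ (P u v h).length ∧ Even (P u v h).length) ∧
    (∀ u v : α, ∀ h : F.Adj u v, P v u h.symm = (P u v h).reverse) ∧
    (∀ u v : α, ∀ h : F.Adj u v, ∀ b : β, b ∈ (P u v h).support →
      b = f u ∨ b = f v ∨ b ∉ Set.range f) ∧
    (∀ u v u' v' : α, ∀ h : F.Adj u v, ∀ h' : F.Adj u' v', s(u, v) ≠ s(u', v') →
      ∀ b : β, b ∈ (P u v h).support → b ∈ (P u' v' h').support → b ∈ Set.range f) ∧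
    (∀ b : β, b ∈ Set.range f ∨ ∃ u v : α, ∃ h : F.Adj u v, b ∈ (P u v h).support) ∧
    (∀ e ∈ Fo.edgeSet, (∃ u v : α, ∃ _ : F.Adj u v, e = s(f u, f v)) ∨
      ∃ u v : α, ∃ h : F.Adj u v, e ∈ (P u v h).edges)

/-- The connected component `C` of `F` is an even cycle (of length at least four). -/
def IsEvenCycleComp {α : Type} (F : SimpleGraph α) (C : F.ConnectedComponent) : Prop :=
  ∃ m : ℕ, 2 ≤ m ∧ Nonempty ((F.induce C.supp) ≃g cycleGraph (2 * m))

/-- Every connected component of `F` is either a non-trivial tree or an even cycle. -/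
def GoodComponents {α : Type} (F : SimpleGraph α) : Prop :=
  ∀ C : F.ConnectedComponent,
    ((F.induce C.supp).IsTree ∧ 2 ≤ Nat.card C.supp) ∨ IsEvenCycleComp F C
/-- `M` (together with `E_t`) joined to a Turán graph contains `H`:
the defining property of members of the decomposition family `𝓜(H)`
of a graph `H` with chromatic number `r + 1`. -/
def DecompProp {γ δ : Type} (H : SimpleGraph γ) (r : ℕ) (M : SimpleGraph δ) : Prop :=
  ∃ t : ℕ, ContainsCopy H
    (graphJoin (graphDisjUnion M (⊥ : SimpleGraph (Fin t)))
      (SimpleGraph.turanGraph ((r - 1) * t) (r - 1)))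

/-- `M` is a member of the decomposition family `𝓜(H)` (for `H` of chromatic number
`r + 1`): it is minimal with respect to the subgraph relation such that
`H ⊆ (M ∪ E_t) ∇ T_{(r-1)t, r-1}` for some `t`.  (Minimality with respect to the
subgraph relation amounts to edge-minimality together with the absence of isolated
vertices.) -/
def IsMinimalDecomp {γ δ : Type} (H : SimpleGraph γ) (r : ℕ) (M : SimpleGraph δ) : Prop :=
  DecompProp H r M ∧
  (∀ M' : SimpleGraph δ, M' ≤ M → M' ≠ M → ¬ DecompProp H r M') ∧
  (∀ v : δ, ∃ w : δ, M.Adj v w)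

/-- `G` is `𝓜(H)`-free, where `𝓜(H)` is the decomposition family of `H`. -/
def DecompFree {γ : Type} (H : SimpleGraph γ) (r : ℕ) {n : ℕ} (G : SimpleGraph (Fin n)) : Prop :=
  ∀ (m : ℕ) (M : SimpleGraph (Fin m)), IsMinimalDecomp H r M → IsFreeOf M G

/-- `G ∈ EX(n, 𝓜(H))`. -/
def IsExtremalDecompFree {γ : Type} (H : SimpleGraph γ) (r n : ℕ)
    (G : SimpleGraph (Fin n)) : Prop :=
  DecompFree H r G ∧ ∀ G' : SimpleGraph (Fin n), DecompFree H r G' → eCount G' ≤ eCount G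

/-- The vertex type of the graph obtained from `F` by cracking all vertices of `U`:
the old vertices outside `U`, a vertex `u_v` for every pair `(u, v)` with `u ∈ U`
and `v` a neighbour of `u`, and a new vertex `w_{u,v}` for every such pair of
Type II (i.e. with `¬ T (u, v)`). -/
abbrev CrackVert {α : Type} (F : SimpleGraph α) (U : Set α) (T : α × α → Prop) : Type :=
  {a : α // a ∉ U} ⊕
    ({p : α × α // p.1 ∈ U ∧ F.Adj p.1 p.2} ⊕
      {p : α × α // (p.1 ∈ U ∧ F.Adj p.1 p.2) ∧ ¬ T p})

/-- The graph obtained from `F` by cracking all vertices of the independent set `U`,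
where each cracked edge `u v` (`u ∈ U`) is of Type I if `T (u, v)` holds (then `u_v`
is joined to `v`) and of Type II otherwise (then `u_v` is joined to the new vertex
`w_{u,v}`). -/
def crackedGraph {α : Type} (F : SimpleGraph α) (U : Set α) (T : α × α → Prop) :
    SimpleGraph (CrackVert F U T) :=
  SimpleGraph.fromRel (fun x y =>
    match x, y with
    | Sum.inl a, Sum.inl b => F.Adj a.val b.val
    | Sum.inl a, Sum.inr (Sum.inl p) => T p.val ∧ p.val.2 = a.val
    | Sum.inr (Sum.inl p), Sum.inr (Sum.inr q) => p.val = q.val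
    | _, _ => False)

/-- `M` is a member of the cracking family `𝓒(F)`: it is obtained from `F` by
cracking all vertices of some independent set `U` of `F`. -/
def InCrackingFamily {α δ : Type} (F : SimpleGraph α) (M : SimpleGraph δ) : Prop :=
  ∃ (U : Set α) (T : α × α → Prop),
    (∀ u ∈ U, ∀ v ∈ U, ¬ F.Adj u v) ∧ Nonempty (M ≃g crackedGraph F U T)

/-- The matching number of `G` is at most `ν`. -/
def MatchingNumberLE {V : Type} (G : SimpleGraph V) (ν : ℕ) : Prop :=
  ∀ s : Finset (Sym2 V), (∀ e ∈ s, e ∈ G.edgeSet) →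
    (∀ e ∈ s, ∀ e' ∈ s, e ≠ e' → ∀ x : V, x ∈ e → x ∉ e') → s.card ≤ ν

/-- The maximum degree of `G` is at most `Δ`. -/
def MaxDegreeLE {V : Type} (G : SimpleGraph V) (Δ : ℕ) : Prop :=
  ∀ v : V, Nat.card (G.neighborSet v) ≤ Δ

/-- `f(ν, Δ)`: the maximum number of edges of a finite graph with matching number
at most `ν` and maximum degree at most `Δ`. -/
noncomputable def fNuDelta (ν Δ : ℕ) : ℕ :=
  sSup {m | ∃ (k : ℕ) (G : SimpleGraph (Fin k)),
    MatchingNumberLE G ν ∧ MaxDegreeLE G Δ ∧ eCount G = m}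

/-- The number of edges of `G` joining distinct parts of the partition `c`. -/
noncomputable def crossCount {n r : ℕ} (G : SimpleGraph (Fin n)) (c : Fin n → Fin r) : ℕ :=
  Nat.card {e : Sym2 (Fin n) // e ∈ G.edgeSet ∧ ∃ x ∈ e, ∃ y ∈ e, c x ≠ c y}

/-- The number of edges of `G` inside part `i` of the partition `c`. -/
noncomputable def insideCount {n r : ℕ} (G : SimpleGraph (Fin n)) (c : Fin n → Fin r)
    (i : Fin r) : ℕ :=
  Nat.card {e : Sym2 (Fin n) // e ∈ G.edgeSet ∧ ∀ x ∈ e, c x = i}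

/-- `d_{V_i}(w)`: the number of neighbours of `w` in part `i` of the partition `c`. -/
noncomputable def degIn {n r : ℕ} (G : SimpleGraph (Fin n)) (c : Fin n → Fin r)
    (i : Fin r) (w : Fin n) : ℕ :=
  Nat.card {y : Fin n // c y = i ∧ G.Adj w y}

/-- The degree of `v` in `G`. -/
noncomputable def degAll {n : ℕ} (G : SimpleGraph (Fin n)) (v : Fin n) : ℕ :=
  Nat.card (G.neighborSet v)

namespace SimpleGraph

variable {V : Type*} {G : SimpleGraph V}

theorem exists_adj_notMem_of_card_lt_degree [G.LocallyFinite] {v : V} {s : Finset V}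
    (h : s.card < G.degree v) : ∃ w, G.Adj v w ∧ w ∉ s := by
  obtain ⟨w, hw, hws⟩ := Finset.exists_mem_notMem_of_card_lt_card h
  exact ⟨w, (mem_neighborFinset G v w).mp hw, hws⟩

theorem exists_common_adj_notMem [Fintype V] [DecidableRel G.Adj] {a b : V} {s : Finset V}
    (h : s.card + Fintype.card V < G.degree a + G.degree b) :
    ∃ w, G.Adj a w ∧ G.Adj b w ∧ w ∉ s := by
  classical
  have hunion := (G.neighborFinset a ∪ G.neighborFinset b).card_le_univ
  have hcard := Finset.card_inter_add_card_union (G.neighborFinset a) (G.neighborFinset b)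
  rw [card_neighborFinset_eq_degree, card_neighborFinset_eq_degree] at hcard
  obtain ⟨w, hw, hws⟩ := Finset.exists_mem_notMem_of_card_lt_card
    (s := s) (t := G.neighborFinset a ∩ G.neighborFinset b) (by omega)
  rw [Finset.mem_inter, mem_neighborFinset, mem_neighborFinset] at hw
  exact ⟨w, hw.1, hw.2, hws⟩

/-- Grown greedily: the end of a shorter path has more neighbours than there are vertices
in `s` or on the path. -/
theorem exists_isPath_length_of_degree [G.LocallyFinite] [DecidableEq V] {s : Finset V} {a : V}
    (ha : a ∉ s) (m : ℕ) (hdeg : ∀ v, s.card + m < G.degree v) :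
    ∃ (b : V) (p : G.Walk a b), p.IsPath ∧ p.length = m ∧ ∀ x ∈ p.support, x ∉ s := by
  induction m with
  | zero => exact ⟨a, .nil, .nil, rfl, by simpa using ha⟩
  | succ m ih =>
    obtain ⟨b, p, hp, hlen, hps⟩ := ih fun v => by have := hdeg v; omega
    have hcard : (s ∪ p.support.toFinset).card < G.degree b := by
      have := Finset.card_union_le s p.support.toFinset
      have := p.support.toFinset_card_le
      have := hdeg b
      rw [Walk.length_support] at *
      omega
    obtain ⟨w, hbw, hw⟩ := exists_adj_notMem_of_card_lt_degree hcard
    rw [Finset.mem_union, List.mem_toFinset, not_or] at hw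
    refine ⟨w, p.concat hbw, hp.concat hw.2 hbw, by rw [Walk.length_concat, hlen], ?_⟩
    intro x hx
    rw [Walk.support_concat, List.mem_append, List.mem_singleton] at hx
    rcases hx with hx | rfl
    exacts [hps x hx, hw.1]

theorem Walk.IsPath.isCycle_cons {u v : V} {q : G.Walk v u} (hq : q.IsPath)
    (hlen : 2 ≤ q.length) (h : G.Adj u v) : (Walk.cons h q).IsCycle := by
  refine (Walk.cons_isCycle_iff q h).mpr ⟨hq, fun he => ?_⟩
  cases q with
  | nil => simp at hlen
  | cons hvx q' =>
    rw [Walk.cons_isPath_iff] at hq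
    rw [Walk.edges_cons, List.mem_cons] at he
    rcases he with he | he
    · rcases Sym2.eq_iff.mp he with ⟨rfl, -⟩ | ⟨rfl, -⟩
      · exact h.ne rfl
      · have := Walk.length_eq_zero_iff.mpr (Walk.isPath_iff_nil.mp hq.1)
        simp only [Walk.length_cons] at hlen
        omega
    · exact hq.2 (q'.snd_mem_support_of_mem_edges he)

end SimpleGraph

/-- Claim 4.1.  Let `G` be a graph on `n` vertices with minimum degree
at least `5n/9`, let `u₀v₀` be an edge of `G`, let `k ≥ 2`, and let `R` be a set of
vertices avoiding `u₀` and `v₀` with `|R| + 2k + 1 ≤ n/9`.  Then `G - R` contains a cycle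
of length `2k + 1` passing through the edge `u₀v₀`. -/
theorem stmt_6 {n : ℕ} (G : SimpleGraph (Fin n))
    (hδ : ∀ v : Fin n, (5 * n : ℝ) / 9 ≤ (Nat.card (G.neighborSet v) : ℝ))
    (u₀ v₀ : Fin n) (huv : G.Adj u₀ v₀)
    (k : ℕ) (hk : 2 ≤ k)
    (R : Finset (Fin n)) (hu₀ : u₀ ∉ R) (hv₀ : v₀ ∉ R)
    (hR : (R.card : ℝ) + 2 * k + 1 ≤ (n : ℝ) / 9) :
    ∃ c : G.Walk u₀ u₀, c.IsCycle ∧ c.length = 2 * k + 1 ∧ s(u₀, v₀) ∈ c.edges ∧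
      ∀ x ∈ c.support, x ∉ R := by
  classical
  have hdeg : ∀ v, 5 * n ≤ G.degree v * 9 := fun v => by
    have := hδ v
    rw [Nat.card_eq_fintype_card, card_neighborSet_eq_degree] at this
    rw [div_le_iff₀ (by norm_num)] at this
    exact_mod_cast this
  have hRn : (R.card + 2 * k + 1) * 9 ≤ n := by
    rw [le_div_iff₀ (by norm_num)] at hR
    exact_mod_cast hR
  obtain ⟨b, p, hp, hplen, hpR⟩ := exists_isPath_length_of_degree (G := G) (a := v₀)
    (s := insert u₀ R) (by simpa [huv.ne'] using hv₀) (2 * k - 2) fun v => by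
      have := R.card_insert_le u₀; have := hdeg v; omega
  have hcard : (insert u₀ R ∪ p.support.toFinset).card + Fintype.card (Fin n)
      < G.degree b + G.degree u₀ := by
    have := Finset.card_union_le (insert u₀ R) p.support.toFinset
    have := p.support.toFinset_card_le
    have := R.card_insert_le u₀
    have := hdeg b; have := hdeg u₀
    rw [Walk.length_support, Fintype.card_fin] at *
    omega
  obtain ⟨w, hbw, huw, hw⟩ := exists_common_adj_notMem hcard
  simp only [Finset.mem_union, Finset.mem_insert, List.mem_toFinset, not_or] at hw hpR
  have hq : ((p.concat hbw).concat huw.symm).IsPath :=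
    (hp.concat hw.2 hbw).concat (by simpa [Ne.symm hw.1.1] using fun h => (hpR u₀ h).1 rfl) _
  refine ⟨.cons huv ((p.concat hbw).concat huw.symm),
    hq.isCycle_cons (by rw [Walk.length_concat, Walk.length_concat]; omega) huv,
    by simp only [Walk.length_cons, Walk.length_concat]; omega, by simp, ?_⟩
  intro x hx
  simp only [Walk.support_cons, Walk.support_concat, List.mem_append, List.mem_cons,
    List.not_mem_nil, or_false] at hx
  rcases hx with rfl | (hx | rfl) | rfl
  exacts [hu₀, (hpR x hx).2, hw.1.2, hu₀]
end

section
/- Let 0 < δ < 1 be a constant and φ ≥ 2 an integer. Let H be a bipartite graph with colour classes A and B such that every vertex u ∈ A has at least δ|B| neighbours in B, |A| ≥ 3φ/δ, and |B| is sufficiently large (in terms of δ and φ). Then there exist a subset A' ⊆ A with |A'| = φ and a subset B' ⊆ B with |B'| = ⌊(2δ/3)^φ |B|⌋ such that every vertex of A' is adjacent to every vertex of B', i.e. H[A', B'] is a complete bipartite graph. -/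
open SimpleGraph

/-! Kővári–Sós–Turán double counting. Write `d(b)` for the number of neighbours of `b ∈ B` in
`A` and `N(S) ⊆ B` for the common neighbourhood of `S ⊆ A`. Then
`φ! ∑_{|S| = φ} |N(S)| = φ! ∑_b C(d(b), φ) ≥ ∑_b (d(b) - φ)^φ`, and by Jensen the right-hand side
is at least `|B| (δ|A| - φ)^φ ≥ |B| (2δ|A|/3)^φ`. As there are at most `|A|^φ / φ!` sets `S`,
one of them has `|N(S)| ≥ (2δ/3)^φ |B|`. -/

theorem Nat.sub_pow_le_descFactorial (n k : ℕ) : (n - k) ^ k ≤ n.descFactorial k :=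
  (Nat.pow_le_pow_left (by omega) k).trans (Nat.pow_sub_le_descFactorial n k)

namespace Finset

theorem card_mul_pow_le_sum_pow {ι K : Type*} [Semifield K] [LinearOrder K]
    [IsStrictOrderedRing K] [ExistsAddOfLE K] {s : Finset ι} {f : ι → K} {c : K}
    (hf : ∀ i ∈ s, 0 ≤ f i) (hc : 0 ≤ c) (hsum : c * #s ≤ ∑ i ∈ s, f i) :
    ∀ n : ℕ, #s * c ^ n ≤ ∑ i ∈ s, f i ^ n
  | 0 => by simp
  | n + 1 => by
    obtain hs | hs := (Nat.cast_nonneg (α := K) #s).eq_or_lt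
    · simp [← hs, sum_nonneg fun i hi => pow_nonneg (hf i hi) _]
    refine le_of_mul_le_mul_left ?_ (pow_pos hs n)
    calc (#s : K) ^ n * (#s * c ^ (n + 1)) = (c * #s) ^ (n + 1) := by ring
      _ ≤ (∑ i ∈ s, f i) ^ (n + 1) := by gcongr
      _ ≤ #s ^ n * ∑ i ∈ s, f i ^ (n + 1) := pow_sum_le_card_mul_sum_pow hf n

section Bipartite

variable {α β : Type*} (r : α → β → Prop) [∀ a b, Decidable (r a b)]

def bipartiteCommonAbove (t : Finset β) (S : Finset α) : Finset β :=
  {b ∈ t | ∀ a ∈ S, r a b}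

@[simp]
theorem mem_bipartiteCommonAbove {t : Finset β} {S : Finset α} {b : β} :
    b ∈ t.bipartiteCommonAbove r S ↔ b ∈ t ∧ ∀ a ∈ S, r a b :=
  mem_filter

theorem sum_card_bipartiteCommonAbove_eq_sum_choose (s : Finset α) (t : Finset β) (n : ℕ) :
    ∑ S ∈ s.powersetCard n, #(t.bipartiteCommonAbove r S) =
      ∑ b ∈ t, (#(s.bipartiteBelow r b)).choose n := by
  simp_rw [bipartiteCommonAbove, card_filter]
  rw [sum_comm]
  refine sum_congr rfl fun b _ => ?_
  rw [← card_filter, ← card_powersetCard]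
  congr 1
  ext S
  simp only [mem_filter, mem_powersetCard, bipartiteBelow, subset_iff]
  grind

theorem exists_mem_powersetCard_le_card_bipartiteCommonAbove {s : Finset α} {t : Finset β}
    {n : ℕ} {c : ℝ} (hc : 0 ≤ c) (hn : n ≤ #s)
    (hsum : (c * #s + n) * #t ≤ ∑ b ∈ t, (#(s.bipartiteBelow r b) : ℝ)) :
    ∃ S ∈ s.powersetCard n, c ^ n * #t ≤ #(t.bipartiteCommonAbove r S) := by
  set d : β → ℕ := fun b => #(s.bipartiteBelow r b)
  have htrunc : c * #s * #t ≤ ∑ b ∈ t, ((d b - n : ℕ) : ℝ) :=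
    calc c * #s * #t = (c * #s + n) * #t - ∑ b ∈ t, (n : ℝ) := by simp; ring
      _ ≤ ∑ b ∈ t, ((d b : ℝ) - n) := by rw [sum_sub_distrib]; linarith
      _ ≤ _ := sum_le_sum fun b _ => sub_le_iff_le_add.2 (by exact_mod_cast le_tsub_add)
  have hjensen : #t * (c * #s) ^ n ≤ ∑ b ∈ t, ((d b - n : ℕ) : ℝ) ^ n :=
    card_mul_pow_le_sum_pow (fun _ _ => Nat.cast_nonneg _) (by positivity) (by linarith) n
  have hdesc : ∑ b ∈ t, ((d b - n : ℕ) : ℝ) ^ n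
      ≤ n.factorial * ∑ S ∈ s.powersetCard n, (#(t.bipartiteCommonAbove r S) : ℝ) := by
    have : ∑ b ∈ t, (d b - n) ^ n
        ≤ n.factorial * ∑ S ∈ s.powersetCard n, #(t.bipartiteCommonAbove r S) := by
      rw [sum_card_bipartiteCommonAbove_eq_sum_choose, mul_sum]
      gcongr with b
      rw [← Nat.descFactorial_eq_factorial_mul_choose]
      exact Nat.sub_pow_le_descFactorial _ _
    exact_mod_cast this
  have hsets : (n.factorial : ℝ) * #(s.powersetCard n) ≤ #s ^ n := by
    rw [card_powersetCard, ← Nat.cast_mul, ← Nat.descFactorial_eq_factorial_mul_choose]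
    exact_mod_cast Nat.descFactorial_le_pow _ _
  have hcount : ∑ _S ∈ s.powersetCard n, c ^ n * #t
      ≤ ∑ S ∈ s.powersetCard n, (#(t.bipartiteCommonAbove r S) : ℝ) := by
    rw [sum_const, nsmul_eq_mul]
    refine le_of_mul_le_mul_left ?_ (Nat.cast_pos.2 n.factorial_pos)
    calc (n.factorial : ℝ) * (#(s.powersetCard n) * (c ^ n * #t))
        = (n.factorial * #(s.powersetCard n)) * (c ^ n * #t) := by ring
      _ ≤ #s ^ n * (c ^ n * #t) := by gcongr
      _ = #t * (c * #s) ^ n := by ring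
      _ ≤ _ := hjensen.trans hdesc
  exact exists_le_of_sum_le (powersetCard_nonempty.2 hn) hcount

end Bipartite

end Finset

open Finset in
theorem stmt_7_general (δ : ℝ) (hδ0 : 0 < δ) (hδ1 : δ < 1) (φ : ℕ) :
    ∃ N₀ : ℕ, ∀ (V : Type) [Fintype V] (H : SimpleGraph V) (A B : Finset V),
      Disjoint A B → (∀ x : V, x ∈ A ∨ x ∈ B) →
      (∀ x y : V, H.Adj x y → (x ∈ A ∧ y ∈ B) ∨ (x ∈ B ∧ y ∈ A)) →
      (∀ u ∈ A, δ * (B.card : ℝ) ≤ (((B : Set V) ∩ H.neighborSet u).ncard : ℝ)) →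
      (3 * (φ : ℝ) / δ ≤ (A.card : ℝ)) →
      N₀ ≤ B.card →
      ∃ A' ⊆ A, ∃ B' ⊆ B, A'.card = φ ∧
        B'.card = ⌊(2 * δ / 3) ^ φ * (B.card : ℝ)⌋₊ ∧
        ∀ a ∈ A', ∀ b ∈ B', H.Adj a b := by
  refine ⟨0, fun V _ H A B _ _ _ hdeg hA _ => ?_⟩
  classical
  have hφA : (φ : ℝ) ≤ δ / 3 * #A := by
    rw [div_le_iff₀ hδ0] at hA
    linarith
  have hdegA : ∀ a ∈ A, δ * #B ≤ #(B.bipartiteAbove H.Adj a) := fun a ha => by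
    have hN : (B.bipartiteAbove H.Adj a : Set V) = (B : Set V) ∩ H.neighborSet a := by ext; simp
    rw [← Set.ncard_coe_finset (B.bipartiteAbove H.Adj a), hN]
    exact hdeg a ha
  have hdegB : (2 * δ / 3 * #A + φ) * #B ≤ ∑ b ∈ B, (#(A.bipartiteBelow H.Adj b) : ℝ) :=
    calc (2 * δ / 3 * #A + φ) * #B ≤ ∑ _a ∈ A, δ * #B := by
          rw [sum_const, nsmul_eq_mul]
          nlinarith [(Nat.cast_nonneg #B : (0 : ℝ) ≤ #B)]
      _ ≤ ∑ a ∈ A, (#(B.bipartiteAbove H.Adj a) : ℝ) := sum_le_sum hdegA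
      _ = _ := by exact_mod_cast sum_card_bipartiteAbove_eq_sum_card_bipartiteBelow ..
  have hφA' : (φ : ℝ) ≤ #A := hφA.trans (by nlinarith [(Nat.cast_nonneg #A : (0 : ℝ) ≤ #A)])
  obtain ⟨S, hS, hN⟩ := exists_mem_powersetCard_le_card_bipartiteCommonAbove H.Adj
    (by positivity) (by exact_mod_cast hφA') hdegB
  obtain ⟨hSA, hScard⟩ := mem_powersetCard.1 hS
  obtain ⟨B', hB'N, hB'⟩ := exists_subset_card_eq (Nat.floor_le_of_le hN)
  have hB'B : ∀ b ∈ B', b ∈ B ∧ ∀ a ∈ S, H.Adj a b := fun b hb =>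
    (mem_bipartiteCommonAbove _).1 (hB'N hb)
  exact ⟨S, hSA, B', fun b hb => (hB'B b hb).1, hScard, hB', fun a ha b hb => (hB'B b hb).2 a ha⟩

/-- Lemma 3.3.  Let `0 < δ < 1` and `φ ≥ 2` be an integer.  Let `H` be a
bipartite graph with colour classes `A` and `B` such that every vertex of `A` has at
least `δ|B|` neighbours in `B`, `|A| ≥ 3φ/δ`, and `|B|` is sufficiently large.  Then
there are `A' ⊆ A` with `|A'| = φ` and `B' ⊆ B` with `|B'| = ⌊(2δ/3)^φ |B|⌋` such that
every vertex of `A'` is adjacent to every vertex of `B'`. -/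
theorem stmt_7 (δ : ℝ) (hδ0 : 0 < δ) (hδ1 : δ < 1) (φ : ℕ) (hφ : 2 ≤ φ) :
    ∃ N₀ : ℕ, ∀ (V : Type) [Fintype V] (H : SimpleGraph V) (A B : Finset V),
      Disjoint A B → (∀ x : V, x ∈ A ∨ x ∈ B) →
      (∀ x y : V, H.Adj x y → (x ∈ A ∧ y ∈ B) ∨ (x ∈ B ∧ y ∈ A)) →
      (∀ u ∈ A, δ * (B.card : ℝ) ≤ (((B : Set V) ∩ H.neighborSet u).ncard : ℝ)) →
      (3 * (φ : ℝ) / δ ≤ (A.card : ℝ)) →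
      N₀ ≤ B.card →
      ∃ A' ⊆ A, ∃ B' ⊆ B, A'.card = φ ∧
        B'.card = ⌊(2 * δ / 3) ^ φ * (B.card : ℝ)⌋₊ ∧
        ∀ a ∈ A', ∀ b ∈ B', H.Adj a b :=
  stmt_7_general δ hδ0 hδ1 φ
end

section
/- (Progressive induction.) Let 𝔘 = ⋃_{n=1}^∞ 𝔘_n be a set whose subsets 𝔘_n are pairwise disjoint and finite, let B be a property (predicate) on 𝔘, and let φ : 𝔘 → ℕ be a function such that: (i) if a satisfies B then φ(a) = 0; (ii) there is an N_0 such that for every n > N_0 and every a ∈ 𝔘_n, either a satisfies B, or there exist n* and a* with n/2 < n* < n, a* ∈ 𝔘_{n*}, and φ(a) < φ(a*). Then there exists n_0 such that for every n > n_0, every a ∈ 𝔘_n satisfies B. -/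
open SimpleGraph

/-! Let `M n` be the largest value of `φ` on the levels `n < ν a ≤ 2 n`. Condition (ii) forces
`M (2 n) < M n` as long as `M (2 n) ≠ 0`, because the partner `a*` of a maximiser of `M (2 n)`
lies in a level of `(n, 4 n)` and cannot beat `M (2 n)` there. So some block `(n, 2 n]` with
`n ≥ N₀` carries `φ = 0`; by strong induction on the level, `φ` then vanishes on every later
level, and beyond `2 n` an element failing `B` would need a partner with `φ` positive. -/

namespace ProgressiveInduction

variable {U : Type*} (ν : U → ℕ)

/-- Condition (ii) of progressive induction, above the threshold `N₀`. -/
def HasProgressiveStep (B : U → Prop) (φ : U → ℕ) (N₀ : ℕ) : Prop :=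
  ∀ a : U, N₀ < ν a → B a ∨ ∃ a' : U, ν a < 2 * ν a' ∧ ν a' < ν a ∧ φ a < φ a'

variable {ν}

theorem finite_setOf_mem_Ioc (hfin : ∀ n : ℕ, {a : U | ν a = n}.Finite) (n m : ℕ) :
    {a : U | ν a ∈ Set.Ioc n m}.Finite :=
  (Set.finite_Ioc n m).preimage' fun k _ => hfin k

noncomputable def blockMax (hfin : ∀ n : ℕ, {a : U | ν a = n}.Finite) (φ : U → ℕ) (n : ℕ) : ℕ :=
  (finite_setOf_mem_Ioc hfin n (2 * n)).toFinset.sup φ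

variable {hfin : ∀ n : ℕ, {a : U | ν a = n}.Finite} {φ : U → ℕ}

theorem le_blockMax {n : ℕ} {a : U} (h₁ : n < ν a) (h₂ : ν a ≤ 2 * n) :
    φ a ≤ blockMax hfin φ n :=
  Finset.le_sup (by simpa using And.intro h₁ h₂)

theorem exists_eq_blockMax {n : ℕ} (h : blockMax hfin φ n ≠ 0) :
    ∃ a : U, n < ν a ∧ ν a ≤ 2 * n ∧ φ a = blockMax hfin φ n := by
  obtain hempty | hne := (finite_setOf_mem_Ioc hfin n (2 * n)).toFinset.eq_empty_or_nonempty
  · simp only [blockMax, hempty, Finset.sup_empty] at h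
    exact absurd rfl h
  · obtain ⟨a, ha, hmax⟩ := Finset.exists_mem_eq_sup _ hne φ
    simp only [Set.Finite.mem_toFinset, Set.mem_ofPred_eq, Set.mem_Ioc] at ha
    exact ⟨a, ha.1, ha.2, hmax.symm⟩

variable {B : U → Prop} {N₀ : ℕ}

theorem blockMax_two_mul_lt (h0 : ∀ a : U, B a → φ a = 0)
    (hstep : HasProgressiveStep ν B φ N₀) {n : ℕ} (hn : N₀ ≤ 2 * n)
    (hne : blockMax hfin φ (2 * n) ≠ 0) :
    blockMax hfin φ (2 * n) < blockMax hfin φ n := by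
  obtain ⟨a, h₁, h₂, hmax⟩ := exists_eq_blockMax hne
  rcases hstep a (by omega) with hB | ⟨a', h₁', h₂', hlt⟩
  · exact absurd (hmax ▸ h0 a hB) hne
  · rcases le_or_gt (ν a') (2 * n) with hle | hgt
    · exact hmax ▸ hlt.trans_le (le_blockMax (by omega) hle)
    · have : φ a' ≤ blockMax hfin φ (2 * n) := le_blockMax hgt (by omega)
      omega

theorem eq_zero_of_blockMax_eq_zero (h0 : ∀ a : U, B a → φ a = 0)
    (hstep : HasProgressiveStep ν B φ N₀) {n : ℕ} (hn : N₀ ≤ 2 * n)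
    (hM : blockMax hfin φ n = 0) {a : U} (ha : n < ν a) : φ a = 0 := by
  induction hk : ν a using Nat.strong_induction_on generalizing a with
  | _ k ih =>
    rcases le_or_gt k (2 * n) with hle | hgt
    · exact Nat.eq_zero_of_le_zero (hM ▸ le_blockMax ha (hk ▸ hle))
    · rcases hstep a (by omega) with hB | ⟨a', h₁, h₂, hlt⟩
      · exact h0 a hB
      · have := ih (ν a') (by omega) (by omega) rfl
        omega

end ProgressiveInduction

theorem Nat.exists_le_eq_zero_of_two_mul_lt {M : ℕ → ℕ} {N : ℕ}
    (h : ∀ n, N ≤ n → M (2 * n) ≠ 0 → M (2 * n) < M n) : ∃ n, N ≤ n ∧ M n = 0 := by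
  obtain ⟨n, hn, hmin⟩ :=
    (InvImage.wf M wellFounded_lt).has_min (Set.Ici N) ⟨N, Set.mem_Ici.mpr le_rfl⟩
  rw [Set.mem_Ici] at hn
  refine ⟨2 * n, by omega, ?_⟩
  by_contra hne
  exact hmin (2 * n) (Set.mem_Ici.mpr (by omega)) (h n hn hne)

open ProgressiveInduction in
theorem stmt_13_general {U : Type} (ν : U → ℕ)
    (hfin : ∀ n : ℕ, {a : U | ν a = n}.Finite)
    (B : U → Prop) (φ : U → ℕ)
    (h0 : ∀ a : U, B a → φ a = 0)
    (hstep : ∃ N₀ : ℕ, ∀ a : U, N₀ < ν a →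
      B a ∨ ∃ a' : U, ν a < 2 * ν a' ∧ ν a' < ν a ∧ φ a < φ a') :
    ∃ n₀ : ℕ, ∀ a : U, n₀ < ν a → B a := by
  obtain ⟨N₀, hstep⟩ := hstep
  obtain ⟨n, hn, hM⟩ := Nat.exists_le_eq_zero_of_two_mul_lt (N := N₀) (M := blockMax hfin φ)
    fun n hn => blockMax_two_mul_lt h0 hstep (by omega)
  refine ⟨2 * n, fun a ha => ?_⟩
  rcases hstep a (by omega) with hB | ⟨a', h₁, -, hlt⟩
  · exact hB
  · have := eq_zero_of_blockMax_eq_zero h0 hstep (by omega) hM (by omega : n < ν a')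
    omega

/-- Simonovits' progressive induction, Lemma 3.1.  Let
`𝔘 = ⋃ₙ 𝔘ₙ` with the `𝔘ₙ` pairwise disjoint finite sets (modelled by an index function
`ν : U → ℕ` with finite fibres), let `B` be a property on `𝔘` and `φ : 𝔘 → ℕ` such that
(i) `φ(a) = 0` whenever `B a` holds, and (ii) there is `N₀` such that for every `a` with
`ν a > N₀`, either `B a` holds or there is `a*` with `ν a / 2 < ν a* < ν a` and
`φ a < φ a*`.  Then there is `n₀` such that `B a` holds for every `a` with `ν a > n₀`. -/
theorem stmt_13 {U : Type} (ν : U → ℕ) (hν : ∀ a : U, 1 ≤ ν a)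
    (hfin : ∀ n : ℕ, {a : U | ν a = n}.Finite)
    (B : U → Prop) (φ : U → ℕ)
    (h0 : ∀ a : U, B a → φ a = 0)
    (hstep : ∃ N₀ : ℕ, ∀ a : U, N₀ < ν a →
      B a ∨ ∃ a' : U, ν a < 2 * ν a' ∧ ν a' < ν a ∧ φ a < φ a') :
    ∃ n₀ : ℕ, ∀ a : U, n₀ < ν a → B a :=
  stmt_13_general ν hfin B φ h0 hstep
end

section
/- Let F = K_1 ∇ F• where every component of F• is an even cycle, set k = |F•|/2, and let F^o be an odd-ballooning of F in which every substituted odd cycle has length at least five. Then for every n ≥ |F•|, the graph (M_{k−1} ∪ K_1) ∇ T_{n−2k+1, 2} contains no subgraph isomorphic to F^o. -/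
open SimpleGraph

/-! Removing the `2k - 1` vertices `S` of `M_{k-1} ∪ K₁` from the host graph leaves a bipartite
graph, so each substituted odd cycle of a copy of `F^o` meets `S`; for an edge of `F` whose ends lie
outside `S` it does so in a new vertex private to that edge. Charging every vertex of `F•` to a
distinct vertex of `S` (its own image, the image of the apex, or a private vertex of an edge at the
apex or of an edge to its successor on its cycle) gives `2k ≤ 2k - 1`. -/

section JoinAdj

variable {α β : Type} {G : SimpleGraph α} {H : SimpleGraph β}

@[simp]
theorem graphJoin_adj_inl_inl {a b : α} : (graphJoin G H).Adj (.inl a) (.inl b) ↔ G.Adj a b := by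
  simp only [graphJoin, fromRel_adj]
  aesop (add safe forward SimpleGraph.Adj.ne, safe forward SimpleGraph.Adj.symm)

@[simp]
theorem graphJoin_adj_inr_inr {a b : β} : (graphJoin G H).Adj (.inr a) (.inr b) ↔ H.Adj a b := by
  simp only [graphJoin, fromRel_adj]
  aesop (add safe forward SimpleGraph.Adj.ne, safe forward SimpleGraph.Adj.symm)

@[simp]
theorem graphJoin_adj_inl_inr {a : α} {b : β} : (graphJoin G H).Adj (.inl a) (.inr b) := by
  simp [graphJoin, fromRel_adj]

@[simp]
theorem graphDisjUnion_adj_inl_inl {a b : α} :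
    (graphDisjUnion G H).Adj (.inl a) (.inl b) ↔ G.Adj a b := by
  simp only [graphDisjUnion, fromRel_adj]
  aesop (add safe forward SimpleGraph.Adj.ne, safe forward SimpleGraph.Adj.symm)

@[simp]
theorem graphDisjUnion_adj_inr_inr {a b : β} :
    (graphDisjUnion G H).Adj (.inr a) (.inr b) ↔ H.Adj a b := by
  simp only [graphDisjUnion, fromRel_adj]
  aesop (add safe forward SimpleGraph.Adj.ne, safe forward SimpleGraph.Adj.symm)

@[simp]
theorem graphDisjUnion_not_adj_inl_inr {a : α} {b : β} :
    ¬ (graphDisjUnion G H).Adj (.inl a) (.inr b) := by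
  simp [graphDisjUnion, fromRel_adj]

@[simp]
theorem graphDisjUnion_not_adj_inr_inl {a : α} {b : β} :
    ¬ (graphDisjUnion G H).Adj (.inr b) (.inl a) := by
  simp [graphDisjUnion, fromRel_adj]

end JoinAdj

theorem matchingGraph_adj {m : ℕ} {x y : Fin (2 * m)} :
    (matchingGraph m).Adj x y ↔ x ≠ y ∧ (x : ℕ) / 2 = y / 2 := by
  simp only [matchingGraph, fromRel_adj]
  grind

theorem SimpleGraph.Walk.exists_mem_support_of_odd_length {W : Type} {G : SimpleGraph W}
    {S : Set W} (c : W → ZMod 2)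
    (hc : ∀ ⦃x y⦄, x ∉ S → y ∉ S → G.Adj x y → c y = c x + 1)
    {x : W} (w : G.Walk x x) (hw : Odd w.length) : ∃ z ∈ w.support, z ∈ S := by
  have parity : ∀ {x y : W} (w : G.Walk x y), (∀ z ∈ w.support, z ∉ S) →
      c y = c x + w.length := by
    intro x y w hS
    induction w with
    | nil => simp
    | cons h w ih =>
      simp only [support_cons, List.mem_cons, forall_eq_or_imp] at hS
      rw [ih hS.2, hc hS.1 (hS.2 _ w.start_mem_support) h, length_cons]
      push_cast; ring
  by_contra! hS
  have := parity w hS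
  rw [hw.natCast_zmod_two] at this
  simp at this

theorem graphDisjUnion_matchingGraph_top_adj_unique {p : ℕ} {x y z : Fin (2 * p) ⊕ Fin 1}
    (hy : (graphDisjUnion (matchingGraph p) ⊤).Adj x y)
    (hz : (graphDisjUnion (matchingGraph p) ⊤).Adj x z) : y = z := by
  rcases x with x | x <;> rcases y with y | y <;> rcases z with z | z <;>
    simp only [graphDisjUnion_adj_inl_inl, graphDisjUnion_adj_inr_inr, top_adj, matchingGraph_adj,
      graphDisjUnion_not_adj_inl_inr, graphDisjUnion_not_adj_inr_inl, Sum.inl.injEq] at hy hz ⊢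
  · rw [Fin.ext_iff] at *
    omega
  · exact absurd (Subsingleton.elim _ _) hy

/-- The graph `(M_p ∪ K₁) ∇ T_{m,2}`. -/
abbrev matchingTuranJoin (p m : ℕ) : SimpleGraph ((Fin (2 * p) ⊕ Fin 1) ⊕ Fin m) :=
  graphJoin (graphDisjUnion (matchingGraph p) ⊤) (turanGraph m 2)

theorem matchingTuranJoin_exists_mem_inl_of_odd {p m : ℕ} {x : (Fin (2 * p) ⊕ Fin 1) ⊕ Fin m}
    (w : (matchingTuranJoin p m).Walk x x) (hw : Odd w.length) :
    ∃ z ∈ w.support, z ∈ Set.range Sum.inl := by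
  refine Walk.exists_mem_support_of_odd_length (G := matchingTuranJoin p m)
    (Sum.elim 0 fun t => ((t : ℕ) : ZMod 2)) ?_ w hw
  rintro (x | s) (y | t) hx hy h
  · exact absurd ⟨x, rfl⟩ hx
  · exact absurd ⟨x, rfl⟩ hx
  · exact absurd ⟨y, rfl⟩ hy
  rw [graphJoin_adj_inr_inr, turanGraph_adj] at h
  rw [Sum.elim_inr, Sum.elim_inr, ← Nat.cast_one, ← Nat.cast_add, ZMod.natCast_eq_natCast_iff']
  omega

theorem matchingTuranJoin_adj_unique_of_mem_inl {p m : ℕ}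
    {x y z : (Fin (2 * p) ⊕ Fin 1) ⊕ Fin m}
    (hx : x ∈ Set.range Sum.inl) (hy : y ∈ Set.range Sum.inl) (hz : z ∈ Set.range Sum.inl)
    (hxy : (matchingTuranJoin p m).Adj x y) (hxz : (matchingTuranJoin p m).Adj x z) : y = z := by
  obtain ⟨x, rfl⟩ := hx
  obtain ⟨y, rfl⟩ := hy
  obtain ⟨z, rfl⟩ := hz
  rw [graphJoin_adj_inl_inl] at hxy hxz
  rw [graphDisjUnion_matchingGraph_top_adj_unique hxy hxz]

namespace SimpleGraph

variable {V W : Type} {G : SimpleGraph V} {H : SimpleGraph W}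

def IsCycleSuccessor (G : SimpleGraph V) (σ : V → V) : Prop :=
  (∀ v, G.Adj v (σ v)) ∧ Function.Injective σ ∧ ∀ v, σ (σ v) ≠ v

theorem isCycleSuccessor_cycleGraph (m : ℕ) : (cycleGraph (m + 3)).IsCycleSuccessor (· + 1) := by
  refine ⟨fun v => ?_, add_left_injective 1, fun v h => ?_⟩
  · rw [cycleGraph_adj]
    right
    simp
  · replace h : v + (1 + 1) = v + 0 := by simpa [add_assoc] using h
    rw [add_left_cancel_iff, Fin.ext_iff] at h
    simp [Fin.val_add, Nat.mod_eq_of_lt (show 2 < m + 3 by omega)] at h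

theorem IsCycleSuccessor.comap (e : G ≃g H) {σ : W → W} (hσ : H.IsCycleSuccessor σ) :
    G.IsCycleSuccessor (e.symm ∘ σ ∘ e) := by
  obtain ⟨hadj, hinj, hσσ⟩ := hσ
  refine ⟨fun v => ?_, e.symm.injective.comp (hinj.comp e.injective), fun v h => ?_⟩
  · rw [← e.map_adj_iff]
    simpa using hadj (e v)
  · apply hσσ (e v)
    simpa [e.symm_apply_eq] using h

theorem exists_isCycleSuccessor_of_forall_connectedComponent
    (h : ∀ C : G.ConnectedComponent, ∃ σ, (G.induce C.supp).IsCycleSuccessor σ) :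
    ∃ σ, G.IsCycleSuccessor σ := by
  choose σC hσC using h
  let σ : V → V := fun v => (σC (G.connectedComponentMk v) ⟨v, rfl⟩).val
  have hσ : ∀ (C : G.ConnectedComponent) (x : C.supp), σ x = σC C x := by
    rintro C ⟨v, rfl⟩
    rfl
  have hσC_mk (v : V) : G.connectedComponentMk (σ v) = G.connectedComponentMk v :=
    (σC _ ⟨v, rfl⟩).2
  refine ⟨σ, fun v => (hσC _).1 ⟨v, rfl⟩, fun u v huv => ?_, fun v => ?_⟩
  · have hv : G.connectedComponentMk v = G.connectedComponentMk u := by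
      rw [← hσC_mk u, huv, hσC_mk]
    have := (hσC _).2.1
      (Subtype.ext ((hσ _ ⟨u, rfl⟩).symm.trans (huv.trans (hσ _ ⟨v, hv⟩))))
    exact congrArg Subtype.val this
  · have hσv : σ (σ v) = σC _ (σC (G.connectedComponentMk v) ⟨v, rfl⟩) := hσ _ (σC _ _)
    rw [hσv]
    exact fun h => (hσC _).2.2 ⟨v, rfl⟩ (Subtype.ext h)

theorem exists_isCycleSuccessor_of_forall_iso_cycleGraph
    (h : ∀ C : G.ConnectedComponent,
      ∃ m, 3 ≤ m ∧ Nonempty (G.induce C.supp ≃g cycleGraph m)) :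
    ∃ σ, G.IsCycleSuccessor σ := by
  refine exists_isCycleSuccessor_of_forall_connectedComponent fun C => ?_
  obtain ⟨m, hm, ⟨e⟩⟩ := h C
  obtain ⟨m, rfl⟩ := Nat.exists_eq_add_of_le' hm
  exact ⟨_, (isCycleSuccessor_cycleGraph m).comap e⟩

end SimpleGraph

def outerEdges {α W : Type} (F : SimpleGraph α) (g : α → W) (S : Set W) : Set (Sym2 α) :=
  {e | e ∈ F.edgeSet ∧ ∀ a ∈ e, g a ∉ S}

theorem mk_mem_outerEdges {α W : Type} {F : SimpleGraph α} {g : α → W} {S : Set W} {u v : α}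
    (h : F.Adj u v) (hu : g u ∉ S) (hv : g v ∉ S) : s(u, v) ∈ outerEdges F g S :=
  ⟨h, Sym2.forall_mem_pair.2 ⟨hu, hv⟩⟩

/-- The trace on `S` of a copy in `G` of an odd-ballooning of `F`: the images `branch a` of the
vertices of `F`, and for each edge `e` of `F` with both ends outside `S` a vertex `priv e ∈ S`
which is the image of a new vertex of the odd cycle substituted for `e`. -/
structure OddBallooningTrace {α W : Type} (F : SimpleGraph α) (G : SimpleGraph W) (S : Set W) :
    Type where
  branch : α ↪ W
  map_adj : ∀ ⦃u v⦄, F.Adj u v → G.Adj (branch u) (branch v)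
  priv : Sym2 α → W
  priv_mem : ∀ e ∈ outerEdges F branch S, priv e ∈ S
  priv_not_mem_range : ∀ e ∈ outerEdges F branch S, priv e ∉ Set.range branch
  injOn_priv : Set.InjOn priv (outerEdges F branch S)

theorem IsOddBallooning.nonempty_oddBallooningTrace {α β W : Type} {F : SimpleGraph α}
    {Fo : SimpleGraph β} {G : SimpleGraph W} {S : Set W} (hFo : IsOddBallooning F Fo)
    (φ : β ↪ W) (hφ : ∀ ⦃a b⦄, Fo.Adj a b → G.Adj (φ a) (φ b))
    (hS : ∀ x (w : G.Walk x x), Odd w.length → ∃ z ∈ w.support, z ∈ S) :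
    Nonempty (OddBallooningTrace F G S) := by
  obtain ⟨f, P, hadj, -, hlen, -, hsupp, hdisj, -⟩ := hFo
  have hpriv : ∀ e : Sym2 α, ∃ b : β, e ∈ outerEdges F (f.trans φ) S →
      φ b ∈ S ∧ b ∉ Set.range f ∧
        ∃ u v, ∃ h : F.Adj u v, s(u, v) = e ∧ b ∈ (P u v h).support := by
    refine Sym2.ind fun u v => ?_
    by_cases h : F.Adj u v
    swap
    · exact ⟨f u, fun he => absurd ((mem_edgeSet F).1 he.1) h⟩
    let ψ : Fo →g G := ⟨φ, fun h => hφ h⟩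
    have hodd : Odd ((Walk.cons (hadj u v h) (P u v h)).map ψ).length := by
      simpa [Walk.length_map] using (hlen u v h).2.add_one
    obtain ⟨z, hz, hzS⟩ := hS _ _ hodd
    rw [Walk.support_map, List.mem_map] at hz
    obtain ⟨b, hb, rfl⟩ := hz
    refine ⟨b, fun ⟨_, huv⟩ => ?_⟩
    have hbu : b ≠ f u := fun hbu => huv u (Sym2.mem_mk_left u v) (by subst hbu; exact hzS)
    have hbv : b ≠ f v := fun hbv => huv v (Sym2.mem_mk_right u v) (by subst hbv; exact hzS)
    have hbP : b ∈ (P u v h).support := by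
      simpa [hbu] using hb
    exact ⟨hzS, (hsupp u v h b hbP).resolve_left hbu |>.resolve_left hbv, u, v, h, rfl, hbP⟩
  choose b hb using hpriv
  refine ⟨⟨f.trans φ, fun u v h => hφ (hadj u v h), φ ∘ b, fun e he => (hb e he).1,
    fun e he => ?_, fun e he e' he' hee' => ?_⟩⟩
  · rintro ⟨a, ha⟩
    exact (hb e he).2.1 ⟨a, φ.injective ha⟩
  · obtain ⟨-, hbe, u, v, h, rfl, hu⟩ := hb e he
    obtain ⟨-, -, u', v', h', rfl, hu'⟩ := hb e' he'
    by_contra hne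
    rw [Function.comp_apply, Function.comp_apply, φ.injective.eq_iff] at hee'
    exact hbe (hdisj u v u' v' h h' hne _ hu (hee' ▸ hu'))

theorem Nat.card_le_card_of_ite_mem {ι W : Type} {S : Set W} [Finite S] {g t : ι → W}
    (hg : Function.Injective g) (htS : ∀ a, g a ∉ S → t a ∈ S)
    (htg : ∀ a b, g a ∉ S → t a ≠ g b)
    (ht : ∀ a b, g a ∉ S → g b ∉ S → t a = t b → a = b) :
    Nat.card ι ≤ Nat.card S := by
  classical
  refine Nat.card_le_card_of_injective (fun a => ⟨if g a ∈ S then g a else t a, ?_⟩)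
    fun a b h => ?_
  · split_ifs with ha
    exacts [ha, htS a ha]
  · replace h := congrArg Subtype.val h
    dsimp only at h
    split_ifs at h with ha hb hb
    · exact hg h
    · exact absurd h.symm (htg b a hb)
    · exact absurd h (htg a b ha)
    · exact ht a b ha hb h

namespace OddBallooningTrace

variable {α W : Type} {Fdot : SimpleGraph α} {G : SimpleGraph W} {S : Set W} [Finite S]

theorem card_le_of_branch_inl_not_mem
    (T : OddBallooningTrace (graphJoin (⊤ : SimpleGraph (Fin 1)) Fdot) G S)
    (hapex : T.branch (.inl 0) ∉ S) :
    Nat.card α ≤ Nat.card S := by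
  have outer {v : α} (hv : T.branch (.inr v) ∉ S) :
      s(.inl 0, .inr v) ∈ outerEdges (graphJoin ⊤ Fdot) T.branch S :=
    mk_mem_outerEdges graphJoin_adj_inl_inr hapex hv
  refine Nat.card_le_card_of_ite_mem (g := T.branch ∘ .inr)
    (t := fun v => T.priv s(.inl 0, .inr v)) (T.branch.injective.comp Sum.inr_injective)
    (fun v hv => T.priv_mem _ (outer hv))
    (fun a b ha hab => T.priv_not_mem_range _ (outer ha) ⟨_, hab.symm⟩)
    (fun a b ha hb hab => ?_)
  exact Sum.inr_injective (Sym2.congr_right.1 (T.injOn_priv (outer ha) (outer hb) hab))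

/-- Each `v` is charged to `branch v` if that lies in `S`, to the apex if `branch (σ v)` does (this
happens for at most one `v`, as the apex has at most one neighbour in `S`), and otherwise to the
private vertex of the edge `v (σ v)`; these edges are distinct since `σ` has no 2-cycles. -/
theorem card_le_of_branch_inl_mem
    (T : OddBallooningTrace (graphJoin (⊤ : SimpleGraph (Fin 1)) Fdot) G S)
    (hapex : T.branch (.inl 0) ∈ S) {σ : α → α} (hσ : Fdot.IsCycleSuccessor σ)
    (hS : ∀ ⦃x y z⦄, x ∈ S → y ∈ S → z ∈ S → G.Adj x y → G.Adj x z → y = z) :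
    Nat.card α ≤ Nat.card S := by
  classical
  obtain ⟨hσadj, hσinj, hσσ⟩ := hσ
  have outer {v : α} (hv : T.branch (.inr v) ∉ S) (hσv : T.branch (.inr (σ v)) ∉ S) :
      s(.inr v, .inr (σ v)) ∈ outerEdges (graphJoin ⊤ Fdot) T.branch S :=
    mk_mem_outerEdges (graphJoin_adj_inr_inr.2 (hσadj v)) hv hσv
  refine Nat.card_le_card_of_ite_mem (g := T.branch ∘ .inr)
    (t := fun v => if T.branch (.inr (σ v)) ∈ S then T.branch (.inl 0)
      else T.priv s(.inr v, .inr (σ v))) (T.branch.injective.comp Sum.inr_injective)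
    (fun v hv => ?_) (fun a b ha hab => ?_) (fun a b ha hb hab => ?_)
  · split_ifs with hσv
    exacts [hapex, T.priv_mem _ (outer hv hσv)]
  · split_ifs at hab with hσa
    · exact Sum.inl_ne_inr (T.branch.injective hab)
    · exact T.priv_not_mem_range _ (outer ha hσa) ⟨_, hab.symm⟩
  · split_ifs at hab with hσa hσb hσb
    · have := hS hapex hσa hσb (T.map_adj graphJoin_adj_inl_inr) (T.map_adj graphJoin_adj_inl_inr)
      exact hσinj (Sum.inr_injective (T.branch.injective this))
    · exact (T.priv_not_mem_range _ (outer hb hσb) ⟨_, hab⟩).elim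
    · exact (T.priv_not_mem_range _ (outer ha hσa) ⟨_, hab.symm⟩).elim
    · rcases Sym2.eq_iff.1 (T.injOn_priv (outer ha hσa) (outer hb hσb) hab) with
        ⟨h, -⟩ | ⟨h₁, h₂⟩
      · exact Sum.inr_injective h
      · cases Sum.inr_injective h₁
        exact absurd (Sum.inr_injective h₂) (hσσ b)

theorem card_le
    (T : OddBallooningTrace (graphJoin (⊤ : SimpleGraph (Fin 1)) Fdot) G S)
    {σ : α → α} (hσ : Fdot.IsCycleSuccessor σ)
    (hS : ∀ ⦃x y z⦄, x ∈ S → y ∈ S → z ∈ S → G.Adj x y → G.Adj x z → y = z) :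
    Nat.card α ≤ Nat.card S := by
  by_cases hapex : T.branch (.inl 0) ∈ S
  · exact T.card_le_of_branch_inl_mem hapex hσ hS
  · exact T.card_le_of_branch_inl_not_mem hapex

end OddBallooningTrace

theorem stmt_16_general {α β : Type} [Fintype α] [Nonempty α]
    (Fdot : SimpleGraph α) (k : ℕ) (hk : Fintype.card α = 2 * k)
    (hcomp : ∀ C : Fdot.ConnectedComponent, IsEvenCycleComp Fdot C)
    (Fo : SimpleGraph β)
    (hFo : IsOddBallooning (graphJoin (⊤ : SimpleGraph (Fin 1)) Fdot) Fo) :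
    ∀ n : ℕ, Fintype.card α ≤ n →
      IsFreeOf Fo (graphJoin
        (graphDisjUnion (matchingGraph (k - 1)) (⊤ : SimpleGraph (Fin 1)))
        (SimpleGraph.turanGraph (n - 2 * k + 1) 2)) := by
  rintro n - ⟨φ, hφ⟩
  obtain ⟨σ, hσ⟩ := Fdot.exists_isCycleSuccessor_of_forall_iso_cycleGraph fun C =>
    let ⟨m, hm, e⟩ := hcomp C
    ⟨2 * m, by omega, e⟩
  obtain ⟨T⟩ := hFo.nonempty_oddBallooningTrace φ hφ (S := Set.range Sum.inl)
    fun _ w hw => matchingTuranJoin_exists_mem_inl_of_odd w hw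
  have hcard := T.card_le hσ fun _ _ _ => matchingTuranJoin_adj_unique_of_mem_inl
  rw [Nat.card_eq_fintype_card, hk, Nat.card_range_of_injective Sum.inl_injective,
    Nat.card_sum, Nat.card_fin, Nat.card_fin] at hcard
  have := Fintype.card_pos (α := α)
  omega

/-- Let `F = K₁ ∇ F•` where every component of `F•` is an even cycle,
let `k = |F•|/2`, and let `F^o` be an odd-ballooning of `F` with every substituted odd
cycle of length at least five.  Then for every `n ≥ |F•|`, the graph
`(M_{k-1} ∪ K₁) ∇ T_{n-2k+1, 2}` contains no subgraph isomorphic to `F^o`. -/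
theorem stmt_16 {α β : Type} [Fintype α] [Fintype β] [Nonempty α]
    (Fdot : SimpleGraph α) (k : ℕ) (hk : Fintype.card α = 2 * k)
    (hcomp : ∀ C : Fdot.ConnectedComponent, IsEvenCycleComp Fdot C)
    (Fo : SimpleGraph β)
    (hFo : IsOddBallooning (graphJoin (⊤ : SimpleGraph (Fin 1)) Fdot) Fo) :
    ∀ n : ℕ, Fintype.card α ≤ n →
      IsFreeOf Fo (graphJoin
        (graphDisjUnion (matchingGraph (k - 1)) (⊤ : SimpleGraph (Fin 1)))
        (SimpleGraph.turanGraph (n - 2 * k + 1) 2)) :=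
  stmt_16_general Fdot k hk hcomp Fo hFo
end

section
/- (Chvátal–Hanson, one case.) Let n, ν, Δ be positive integers with Δ ≥ 2ν + 1 and n ≥ ν + Δ + 1. Then the maximum number of edges of a graph on n vertices whose matching number is at most ν and whose maximum degree is at most Δ equals νΔ. -/
open SimpleGraph

/-!
Upper bound, by strong induction on `ν(G)`. If some vertex `v` is covered by every maximum
matching, deleting the edges at `v` lowers `ν` and removes at most `Δ` edges. If two
non-isolated vertices are not connected, splitting `G` along the component of one of them gives
two graphs with smaller `ν` whose bounds add up. Otherwise every vertex is missed by some maximum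
matching and the non-isolated vertices form one component, so by Gallai's lemma there are at most
`2ν + 1` of them, hence at most `ν(2ν + 1) ≤ νΔ` edges. Gallai's lemma comes from an exchange
along alternating paths: if `M` misses `u` and `N` covers `u`, then either `M` can be augmented
or `M` and `N` can trade `u` for a vertex `z`.

The bound is attained by `K_{ν,Δ}`, whose `ν`-side is a vertex cover.
-/

namespace SimpleGraph

variable {V : Type} {G H : SimpleGraph V} {M N : Finset (Sym2 V)} {a b u v : V}

section Matching

/-- A matching given by its finite set of edges, in the form quantified over by
`MatchingNumberLE`. -/
def IsMatchingSet (G : SimpleGraph V) (M : Finset (Sym2 V)) : Prop :=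
  (∀ e ∈ M, e ∈ G.edgeSet) ∧ ∀ e ∈ M, ∀ e' ∈ M, e ≠ e' → ∀ x, x ∈ e → x ∉ e'

def matchedVerts (M : Finset (Sym2 V)) : Set V := {v | ∃ e ∈ M, v ∈ e}

lemma matchedVerts_mono (h : M ⊆ N) : matchedVerts M ⊆ matchedVerts N :=
  fun _ ⟨e, he, hx⟩ => ⟨e, h he, hx⟩

lemma left_mem_matchedVerts (h : s(a, b) ∈ M) : a ∈ matchedVerts M :=
  ⟨_, h, Sym2.mem_mk_left a b⟩

lemma right_mem_matchedVerts (h : s(a, b) ∈ M) : b ∈ matchedVerts M :=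
  ⟨_, h, Sym2.mem_mk_right a b⟩

lemma exists_mem_of_mem_matchedVerts (h : a ∈ matchedVerts M) : ∃ b, s(a, b) ∈ M := by
  obtain ⟨e, he, hae⟩ := h
  obtain ⟨b, rfl⟩ := Sym2.mem_iff_exists.mp hae
  exact ⟨b, he⟩

lemma IsMatchingSet.adj (hM : G.IsMatchingSet M) (h : s(a, b) ∈ M) : G.Adj a b := hM.1 _ h

lemma IsMatchingSet.mono (hM : G.IsMatchingSet M) (hGH : G ≤ H) : H.IsMatchingSet M :=
  ⟨fun e he => edgeSet_mono hGH (hM.1 e he), hM.2⟩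

lemma IsMatchingSet.subset (hM : G.IsMatchingSet M) (hNM : N ⊆ M) : G.IsMatchingSet N :=
  ⟨fun e he => hM.1 e (hNM he), fun e he e' he' => hM.2 e (hNM he) e' (hNM he')⟩

lemma IsMatchingSet.eq_of_mem (hM : G.IsMatchingSet M) {e e' : Sym2 V} (he : e ∈ M)
    (he' : e' ∈ M) (hv : v ∈ e) (hv' : v ∈ e') : e = e' := by
  by_contra hne
  exact hM.2 e he e' he' hne v hv hv'

lemma disjoint_of_disjoint_matchedVerts (h : Disjoint (matchedVerts M) (matchedVerts N)) :
    Disjoint M N :=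
  Finset.disjoint_left.mpr fun e heM heN => by
    induction e using Sym2.ind with
    | _ a b =>
      exact Set.disjoint_left.mp h (left_mem_matchedVerts heM) (left_mem_matchedVerts heN)

variable [DecidableEq V]

lemma matchedVerts_insert :
    matchedVerts (insert s(a, b) M) = insert a (insert b (matchedVerts M)) := by
  ext x
  simp only [matchedVerts, Finset.exists_mem_insert, Sym2.mem_iff, Set.mem_insert_iff,
    Set.mem_ofPred_eq, or_assoc]

lemma card_insert_of_left_notMem_matchedVerts (ha : a ∉ matchedVerts M) :
    (insert s(a, b) M).card = M.card + 1 :=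
  Finset.card_insert_of_notMem fun h => ha (left_mem_matchedVerts h)

namespace IsMatchingSet

lemma left_notMem_matchedVerts_erase (hM : G.IsMatchingSet M) (h : s(a, b) ∈ M) :
    a ∉ matchedVerts (M.erase s(a, b)) := by
  rintro ⟨e, he, hae⟩
  obtain ⟨hne, he⟩ := Finset.mem_erase.mp he
  exact hne (hM.eq_of_mem he h hae (Sym2.mem_mk_left a b))

lemma matchedVerts_erase (hM : G.IsMatchingSet M) (h : s(a, b) ∈ M) :
    matchedVerts (M.erase s(a, b)) = matchedVerts M \ {a, b} := by
  ext x
  refine ⟨fun hx => ⟨matchedVerts_mono (Finset.erase_subset _ _) hx, ?_⟩, ?_⟩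
  · rintro (rfl | rfl)
    · exact hM.left_notMem_matchedVerts_erase h hx
    · rw [Sym2.eq_swap] at h hx
      exact hM.left_notMem_matchedVerts_erase h hx
  · rintro ⟨⟨e, he, hxe⟩, hxab⟩
    refine ⟨e, Finset.mem_erase.mpr ⟨?_, he⟩, hxe⟩
    rintro rfl
    exact hxab (Sym2.mem_iff.mp hxe)

lemma insert_edge (hM : G.IsMatchingSet M) (hab : G.Adj a b) (ha : a ∉ matchedVerts M)
    (hb : b ∉ matchedVerts M) : G.IsMatchingSet (insert s(a, b) M) := by
  refine ⟨fun e he => ?_, fun e he e' he' hne x hx hx' => ?_⟩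
  · rcases Finset.mem_insert.mp he with rfl | he
    exacts [hab, hM.1 e he]
  · have key : ∀ f ∈ M, x ∈ s(a, b) → x ∉ f := by
      intro f hf hxab hxf
      rcases Sym2.mem_iff.mp hxab with rfl | rfl
      exacts [ha ⟨f, hf, hxf⟩, hb ⟨f, hf, hxf⟩]
    rcases Finset.mem_insert.mp he with rfl | he <;>
      rcases Finset.mem_insert.mp he' with rfl | he'
    · exact hne rfl
    · exact key e' he' hx hx'
    · exact key e he hx' hx
    · exact hM.2 e he e' he' hne x hx hx'

lemma union (hM : G.IsMatchingSet M) (hN : G.IsMatchingSet N)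
    (h : Disjoint (matchedVerts M) (matchedVerts N)) : G.IsMatchingSet (M ∪ N) := by
  refine ⟨fun e he => (Finset.mem_union.mp he).elim (hM.1 e) (hN.1 e),
    fun e he e' he' hne x hx hx' => ?_⟩
  rcases Finset.mem_union.mp he with he | he <;> rcases Finset.mem_union.mp he' with he' | he'
  · exact hM.2 e he e' he' hne x hx hx'
  · exact Set.disjoint_left.mp h ⟨e, he, hx⟩ ⟨e', he', hx'⟩
  · exact Set.disjoint_left.mp h ⟨e', he', hx'⟩ ⟨e, he, hx⟩
  · exact hN.2 e he e' he' hne x hx hx'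

end IsMatchingSet

theorem IsMatchingSet.exchange (hM : G.IsMatchingSet M) (hN : G.IsMatchingSet N)
    (huM : u ∉ matchedVerts M) (huN : u ∈ matchedVerts N) :
    (∃ M', G.IsMatchingSet M' ∧ M'.card = M.card + 1 ∧
      matchedVerts M' ⊆ matchedVerts M ∪ matchedVerts N) ∨
    ∃ z ∈ matchedVerts M, ∃ M' N', G.IsMatchingSet M' ∧ G.IsMatchingSet N' ∧
      M'.card = M.card ∧ N'.card = N.card ∧
      matchedVerts M' ⊆ insert u (matchedVerts M \ {z}) ∧
      matchedVerts N' ⊆ insert z (matchedVerts N \ {u}) := by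
  induction hn : N.card using Nat.strong_induction_on generalizing M N u with
  | _ n ih =>
  -- Follow the alternating path `u –N– y –M– w ⋯` and recurse from `w` in `N - uy`, `M - yw`.
  obtain ⟨y, huy⟩ := exists_mem_of_mem_matchedVerts huN
  have hadj_uy := hN.adj huy
  have hyN := right_mem_matchedVerts huy
  have hne_uy := hadj_uy.ne
  by_cases hyM : y ∉ matchedVerts M
  · refine .inl ⟨_, hM.insert_edge hadj_uy huM hyM,
      card_insert_of_left_notMem_matchedVerts huM, ?_⟩
    rw [matchedVerts_insert]
    clear ih
    grind
  obtain ⟨w, hyw⟩ := exists_mem_of_mem_matchedVerts (not_not.mp hyM)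
  have hadj_yw := hM.adj hyw
  have hwM := right_mem_matchedVerts hyw
  have hne_yw := hadj_yw.ne
  have hvM₁ := hM.matchedVerts_erase hyw
  have hvN₁ := hN.matchedVerts_erase huy
  have hcM := Finset.card_erase_add_one hyw
  have hcN := Finset.card_erase_add_one huy
  have hM₁ := hM.subset (Finset.erase_subset s(y, w) M)
  have hN₁ := hN.subset (Finset.erase_subset s(u, y) N)
  by_cases hwN : w ∉ matchedVerts N
  · clear ih
    refine .inr ⟨w, hwM, _, _, hM₁.insert_edge hadj_uy (by grind) (by grind),
      hN₁.insert_edge hadj_yw (by grind) (by grind), ?_, ?_, ?_, ?_⟩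
    · rw [card_insert_of_left_notMem_matchedVerts (by grind)]; omega
    · rw [card_insert_of_left_notMem_matchedVerts (by grind)]; omega
    · rw [matchedVerts_insert]; grind
    · rw [matchedVerts_insert]; grind
  rcases ih _ (by omega) hM₁ hN₁ (u := w) (by grind) (by grind) rfl with
    ⟨M₂, hM₂, hc₂, hv₂⟩ | ⟨z, hz, M₂, N₂, hM₂, hN₂, hcM₂, hcN₂, hvM₂, hvN₂⟩ <;> clear ih
  · refine .inl ⟨_, hM₂.insert_edge hadj_uy (by grind) (by grind), ?_, ?_⟩
    · rw [card_insert_of_left_notMem_matchedVerts (by grind)]; omega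
    · rw [matchedVerts_insert]; grind
  · refine .inr ⟨z, by grind, _, _, hM₂.insert_edge hadj_uy (by grind) (by grind),
      hN₂.insert_edge hadj_yw (by grind) (by grind), ?_, ?_, ?_, ?_⟩
    · rw [card_insert_of_left_notMem_matchedVerts (by grind)]; omega
    · rw [card_insert_of_left_notMem_matchedVerts (by grind)]; omega
    · rw [matchedVerts_insert]; grind
    · rw [matchedVerts_insert]; grind

end Matching

section MatchingNumber

lemma IsMatchingSet.matchedVerts_subset_support (hM : G.IsMatchingSet M) :
    matchedVerts M ⊆ G.support := by
  rintro x ⟨e, he, hxe⟩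
  obtain ⟨y, rfl⟩ := Sym2.mem_iff_exists.mp hxe
  exact ⟨y, hM.adj he⟩

lemma ncard_matchedVerts_le (M : Finset (Sym2 V)) : (matchedVerts M).ncard ≤ 2 * M.card := by
  classical
  have hM : matchedVerts M = ↑(M.biUnion Sym2.toFinset) := by
    ext x
    simp [matchedVerts]
  rw [hM, Set.ncard_coe_finset, mul_comm]
  refine Finset.card_biUnion_le.trans (Finset.sum_le_card_nsmul _ _ _ fun e _ => ?_)
  rw [Sym2.card_toFinset]
  split_ifs <;> omega

noncomputable def matchingNumber (G : SimpleGraph V) : ℕ :=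
  sSup {k | ∃ M, G.IsMatchingSet M ∧ M.card = k}

def IsMaximumMatchingSet (G : SimpleGraph V) (M : Finset (Sym2 V)) : Prop :=
  G.IsMatchingSet M ∧ M.card = G.matchingNumber

variable [Finite V]

lemma IsMatchingSet.card_le_ncard_edgeSet (hM : G.IsMatchingSet M) :
    M.card ≤ G.edgeSet.ncard := by
  rw [← Set.ncard_coe_finset]
  exact Set.ncard_le_ncard hM.1

lemma bddAbove_card_isMatchingSet (G : SimpleGraph V) :
    BddAbove {k | ∃ M, G.IsMatchingSet M ∧ M.card = k} :=
  ⟨_, fun _ ⟨_, hM, hk⟩ => hk ▸ hM.card_le_ncard_edgeSet⟩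

lemma IsMatchingSet.card_le_matchingNumber (hM : G.IsMatchingSet M) :
    M.card ≤ G.matchingNumber :=
  le_csSup G.bddAbove_card_isMatchingSet ⟨M, hM, rfl⟩

lemma exists_isMaximumMatchingSet (G : SimpleGraph V) : ∃ M, G.IsMaximumMatchingSet M := by
  obtain ⟨M, hM, hc⟩ := Nat.sSup_mem (s := {k | ∃ M, G.IsMatchingSet M ∧ M.card = k})
    ⟨0, ∅, ⟨by simp, by simp⟩, rfl⟩ G.bddAbove_card_isMatchingSet
  exact ⟨M, hM, hc⟩

lemma matchingNumber_le_iff {k : ℕ} : G.matchingNumber ≤ k ↔ MatchingNumberLE G k := by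
  refine ⟨fun h M hM hdisj => (IsMatchingSet.card_le_matchingNumber ⟨hM, hdisj⟩).trans h,
    fun h => ?_⟩
  obtain ⟨M, hM, hc⟩ := G.exists_isMaximumMatchingSet
  exact hc ▸ h M hM.1 hM.2

lemma matchingNumber_mono (hGH : G ≤ H) : G.matchingNumber ≤ H.matchingNumber := by
  obtain ⟨M, hM, hc⟩ := G.exists_isMaximumMatchingSet
  exact hc ▸ (hM.mono hGH).card_le_matchingNumber

lemma one_le_matchingNumber (hab : G.Adj a b) : 1 ≤ G.matchingNumber :=
  IsMatchingSet.card_le_matchingNumber (M := {s(a, b)}) ⟨by simpa using hab, by simp⟩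

section Gallai

variable [DecidableEq V]

lemma IsMaximumMatchingSet.not_adj (hM : G.IsMaximumMatchingSet M) (hu : u ∉ matchedVerts M)
    (hv : v ∉ matchedVerts M) : ¬ G.Adj u v := fun huv => by
  have := (hM.1.insert_edge huv hu hv).card_le_matchingNumber
  rw [card_insert_of_left_notMem_matchedVerts hu, hM.2] at this
  omega

theorem IsMaximumMatchingSet.eq_of_reachable
    (hG : ∀ t, ∃ N, G.IsMaximumMatchingSet N ∧ t ∉ matchedVerts N)
    (hM : G.IsMaximumMatchingSet M) (hu : u ∉ matchedVerts M) (hv : v ∉ matchedVerts M)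
    (huv : G.Reachable u v) : u = v := by
  obtain ⟨p⟩ := huv
  induction p generalizing M with
  | nil => rfl
  | @cons u t v hut q ih =>
  by_contra hne
  -- `N` misses `t`; trading `u` between `M` and `N` yields a maximum matching missing `t` and `v`
  -- (recurse along the walk) or one missing the adjacent vertices `u` and `t`.
  obtain ⟨N, hN, htN⟩ := hG t
  by_cases huN : u ∉ matchedVerts N
  · exact hN.not_adj huN htN hut
  rcases hM.1.exchange hN.1 hu (not_not.mp huN) with ⟨M', hM', hc, -⟩ |
    ⟨z, hz, M', N', hM', hN', hcM, hcN, hvM, hvN⟩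
  · have := hM'.card_le_matchingNumber
    rw [hc, hM.2] at this
    omega
  by_cases hzt : z = t
  · subst hzt
    obtain rfl := ih ⟨hM', hcM.trans hM.2⟩ (fun h => by grind) (fun h => by grind)
    exact hM.not_adj hu hv hut
  · exact IsMaximumMatchingSet.not_adj ⟨hN', hcN.trans hN.2⟩ (fun h => by grind)
      (fun h => by grind) hut

theorem ncard_support_le_two_mul_matchingNumber_add_one
    (hconn : ∀ u ∈ G.support, ∀ v ∈ G.support, G.Reachable u v)
    (hG : ∀ t, ∃ N, G.IsMaximumMatchingSet N ∧ t ∉ matchedVerts N) :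
    G.support.ncard ≤ 2 * G.matchingNumber + 1 := by
  obtain ⟨M, hM⟩ := G.exists_isMaximumMatchingSet
  have hunmatched : (G.support \ matchedVerts M).ncard ≤ 1 :=
    (Set.ncard_le_one).mpr fun a ha b hb =>
      hM.eq_of_reachable hG ha.2 hb.2 (hconn a ha.1 b hb.1)
  calc G.support.ncard
      ≤ (matchedVerts M ∪ (G.support \ matchedVerts M)).ncard :=
        Set.ncard_le_ncard (by grind)
    _ ≤ (matchedVerts M).ncard + (G.support \ matchedVerts M).ncard := Set.ncard_union_le _ _
    _ ≤ 2 * G.matchingNumber + 1 := by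
        have := ncard_matchedVerts_le M
        rw [hM.2] at this
        omega

end Gallai

end MatchingNumber

section EdgeCount

variable {s : Set V}

lemma spanningCoe_induce_adj :
    (G.induce s).spanningCoe.Adj a b ↔ G.Adj a b ∧ a ∈ s ∧ b ∈ s := by
  simp only [map_adj, comap_adj, Function.Embedding.coe_subtype, Subtype.exists,
    exists_and_right, exists_eq_right_right, exists_eq_right]
  tauto

variable [Finite V]

lemma MaxDegreeLE.mono {Δ : ℕ} (hGH : G ≤ H) (hH : MaxDegreeLE H Δ) : MaxDegreeLE G Δ :=
  fun v => (Nat.card_mono (Set.toFinite _) fun _ hw => hGH hw).trans (hH v)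

lemma eCount_le_eCount_deleteIncidenceSet_add (G : SimpleGraph V) (v : V) :
    eCount G ≤ eCount (G.deleteIncidenceSet v) + Nat.card (G.neighborSet v) := by
  classical
  rw [eCount, eCount, ← Nat.card_congr (G.incidenceSetEquivNeighborSet v),
    Nat.card_coe_set_eq, Nat.card_coe_set_eq, Nat.card_coe_set_eq, edgeSet_deleteIncidenceSet]
  exact (Set.ncard_le_ncard (by grind)).trans (Set.ncard_union_le _ _)

lemma eCount_le_eCount_spanningCoe_induce_add (hs : ∀ a b, G.Adj a b → (a ∈ s ↔ b ∈ s)) :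
    eCount G ≤ eCount (G.induce s).spanningCoe + eCount (G.induce sᶜ).spanningCoe := by
  simp only [eCount, Nat.card_coe_set_eq]
  refine (Set.ncard_le_ncard fun e he => ?_).trans (Set.ncard_union_le _ _)
  induction e using Sym2.ind with
  | _ a b =>
  have := hs a b he
  by_cases ha : a ∈ s
  · exact .inl (spanningCoe_induce_adj.mpr ⟨he, ha, this.mp ha⟩)
  · exact .inr (spanningCoe_induce_adj.mpr ⟨he, ha, mt this.mpr ha⟩)

lemma eCount_le_choose_ncard_support (G : SimpleGraph V) :
    eCount G ≤ G.support.ncard.choose 2 := by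
  classical
  have := Fintype.ofFinite V
  rw [eCount, Nat.card_eq_fintype_card, ← edgeFinset_card, ← card_edgeFinset_induce_support,
    Set.ncard_eq_toFinset_card', Set.toFinset_card]
  exact card_edgeFinset_le_card_choose_two

lemma matchingNumber_spanningCoe_induce_add_le (G : SimpleGraph V) (s : Set V) :
    (G.induce s).spanningCoe.matchingNumber + (G.induce sᶜ).spanningCoe.matchingNumber ≤
      G.matchingNumber := by
  classical
  obtain ⟨M₁, hM₁, hc₁⟩ := (G.induce s).spanningCoe.exists_isMaximumMatchingSet
  obtain ⟨M₂, hM₂, hc₂⟩ := (G.induce sᶜ).spanningCoe.exists_isMaximumMatchingSet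
  have hv₁ : matchedVerts M₁ ⊆ s := fun x hx => by
    obtain ⟨y, hy⟩ := hM₁.matchedVerts_subset_support hx
    exact (spanningCoe_induce_adj.mp hy).2.1
  have hv₂ : matchedVerts M₂ ⊆ sᶜ := fun x hx => by
    obtain ⟨y, hy⟩ := hM₂.matchedVerts_subset_support hx
    exact (spanningCoe_induce_adj.mp hy).2.1
  have hdisj := Disjoint.mono hv₁ hv₂ disjoint_compl_right
  rw [← hc₁, ← hc₂, ← Finset.card_union_of_disjoint (disjoint_of_disjoint_matchedVerts hdisj)]
  exact ((hM₁.mono (G.spanningCoe_induce_le s)).union (hM₂.mono (G.spanningCoe_induce_le sᶜ))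
    hdisj).card_le_matchingNumber

lemma matchingNumber_deleteIncidenceSet_lt
    (hv : ∀ M, G.IsMaximumMatchingSet M → v ∈ matchedVerts M) :
    (G.deleteIncidenceSet v).matchingNumber < G.matchingNumber := by
  obtain ⟨M, hM, hc⟩ := (G.deleteIncidenceSet v).exists_isMaximumMatchingSet
  have hvM : v ∉ matchedVerts M := fun h =>
    (support_deleteIncidenceSet_subset G v (hM.matchedVerts_subset_support h)).2 rfl
  have hMG := hM.mono (G.deleteIncidenceSet_le v)
  refine lt_of_le_of_ne (hc ▸ hMG.card_le_matchingNumber) fun h => hvM (hv M ⟨hMG, ?_⟩)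
  rw [hc, h]

theorem eCount_le_matchingNumber_mul {Δ : ℕ} (G : SimpleGraph V)
    (hΔ : 2 * G.matchingNumber + 1 ≤ Δ) (hdeg : MaxDegreeLE G Δ) :
    eCount G ≤ G.matchingNumber * Δ := by
  classical
  induction hk : G.matchingNumber using Nat.strong_induction_on generalizing G with
  | _ k ih =>
  have ih' : ∀ H ≤ G, H.matchingNumber < k → eCount H ≤ H.matchingNumber * Δ :=
    fun H hH hlt => ih _ hlt H (by grind [matchingNumber_mono hH]) (hdeg.mono hH) rfl
  by_cases hess : ∃ v, ∀ M, G.IsMaximumMatchingSet M → v ∈ matchedVerts M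
  · obtain ⟨v, hv⟩ := hess
    have hlt := hk ▸ matchingNumber_deleteIncidenceSet_lt hv
    calc eCount G ≤ eCount (G.deleteIncidenceSet v) + Δ :=
          (G.eCount_le_eCount_deleteIncidenceSet_add v).trans (by gcongr; exact hdeg v)
      _ ≤ ((G.deleteIncidenceSet v).matchingNumber + 1) * Δ := by
          rw [Nat.succ_mul]; gcongr; exact ih' _ (G.deleteIncidenceSet_le v) hlt
      _ ≤ k * Δ := by gcongr; exact hlt
  push Not at hess
  by_cases hconn : ∀ u ∈ G.support, ∀ v ∈ G.support, G.Reachable u v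
  · calc eCount G ≤ G.support.ncard.choose 2 := G.eCount_le_choose_ncard_support
      _ ≤ (2 * k + 1).choose 2 :=
          Nat.choose_le_choose 2 (hk ▸ ncard_support_le_two_mul_matchingNumber_add_one hconn hess)
      _ = k * (2 * k + 1) := by
          rw [Nat.choose_two_right, Nat.add_sub_cancel,
            show (2 * k + 1) * (2 * k) = 2 * (k * (2 * k + 1)) by ring,
            Nat.mul_div_cancel_left _ two_pos]
      _ ≤ k * Δ := by gcongr; omega
  push Not at hconn
  obtain ⟨u, ⟨x, hx⟩, w, ⟨y, hy⟩, huw⟩ := hconn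
  set s := {z | G.Reachable u z}
  have hs : ∀ a b, G.Adj a b → (a ∈ s ↔ b ∈ s) := fun a b hab =>
    ⟨fun h => h.trans hab.reachable, fun h => h.trans hab.symm.reachable⟩
  have h₁ : 1 ≤ (G.induce s).spanningCoe.matchingNumber :=
    one_le_matchingNumber (spanningCoe_induce_adj.mpr ⟨hx, .rfl, hx.reachable⟩)
  have h₂ : 1 ≤ (G.induce sᶜ).spanningCoe.matchingNumber :=
    one_le_matchingNumber
      (spanningCoe_induce_adj.mpr ⟨hy, huw, fun h => huw (h.trans hy.symm.reachable)⟩)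
  have hsum := G.matchingNumber_spanningCoe_induce_add_le s
  calc eCount G ≤ eCount (G.induce s).spanningCoe + eCount (G.induce sᶜ).spanningCoe :=
        eCount_le_eCount_spanningCoe_induce_add hs
    _ ≤ (G.induce s).spanningCoe.matchingNumber * Δ +
        (G.induce sᶜ).spanningCoe.matchingNumber * Δ :=
        add_le_add (ih' _ (G.spanningCoe_induce_le s) (by omega))
          (ih' _ (G.spanningCoe_induce_le sᶜ) (by omega))
    _ ≤ k * Δ := by rw [← add_mul]; gcongr; omega

end EdgeCount

section CompleteBipartite

variable {W : Type} {C : Set V} {Δ : ℕ}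

lemma IsMatchingSet.card_le_ncard_of_isVertexCover (hM : G.IsMatchingSet M)
    (hC : G.IsVertexCover C) (hfin : C.Finite) : M.card ≤ C.ncard := by
  rw [Set.ncard_eq_toFinset_card C hfin]
  refine Finset.card_le_card_of_forall_subsingleton (fun e x => x ∈ e) (fun e he => ?_)
    fun x _ e he e' he' => hM.eq_of_mem he.1 he'.1 he.2 he'.2
  induction e using Sym2.ind with
  | _ a b =>
  rcases hC (hM.adj he) with h | h
  exacts [⟨a, by simpa using h, Sym2.mem_mk_left a b⟩,
    ⟨b, by simpa using h, Sym2.mem_mk_right a b⟩]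

lemma IsVertexCover.map (f : V ↪ W) (hC : G.IsVertexCover C) :
    (G.map f).IsVertexCover (f '' C) := by
  rintro _ _ ⟨-, a, b, hab, rfl, rfl⟩
  exact (hC hab).imp (Set.mem_image_of_mem f) (Set.mem_image_of_mem f)

lemma MaxDegreeLE.map (f : V ↪ W) (hG : MaxDegreeLE G Δ) : MaxDegreeLE (G.map f) Δ := by
  intro w
  by_cases hw : ∃ v, f v = w
  · obtain ⟨v, rfl⟩ := hw
    rw [neighborSet_map, Nat.card_coe_set_eq, Set.ncard_image_of_injective _ f.injective,
      ← Nat.card_coe_set_eq]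
    exact hG v
  · push Not at hw
    have : (G.map f).neighborSet w = ∅ := by
      ext x
      simp only [mem_neighborSet, map_adj, Set.mem_empty_iff_false, iff_false]
      rintro ⟨a, b, -, rfl, -⟩
      exact hw a rfl
    simp [this]

lemma eCount_map (f : V ↪ W) (G : SimpleGraph V) : eCount (G.map f) = eCount G := by
  rw [eCount, eCount, Nat.card_coe_set_eq, Nat.card_coe_set_eq, edgeSet_map,
    Set.ncard_image_of_injective _ f.sym2Map.injective]

variable {α β : Type}

lemma isVertexCover_completeBipartiteGraph_range_inl :
    (completeBipartiteGraph α β).IsVertexCover (Set.range Sum.inl) := by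
  rintro (a | b) (a' | b') h <;> simp_all

lemma maxDegreeLE_completeBipartiteGraph (hα : Nat.card α ≤ Δ) (hβ : Nat.card β ≤ Δ) :
    MaxDegreeLE (completeBipartiteGraph α β) Δ := by
  rintro (a | b)
  · have : (completeBipartiteGraph α β).neighborSet (.inl a) = Set.range Sum.inr := by
      ext (x | x) <;> simp
    rwa [this, Nat.card_coe_set_eq, Set.ncard_range_of_injective Sum.inr_injective]
  · have : (completeBipartiteGraph α β).neighborSet (.inr b) = Set.range Sum.inl := by
      ext (x | x) <;> simp
    rwa [this, Nat.card_coe_set_eq, Set.ncard_range_of_injective Sum.inl_injective]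

lemma eCount_completeBipartiteGraph [Finite α] [Finite β] :
    eCount (completeBipartiteGraph α β) = Nat.card α * Nat.card β := by
  rw [eCount, Nat.card_coe_set_eq, Set.ncard_def, encard_edgeSet_completeBipartiteGraph,
    ENat.card_eq_coe_natCard, ENat.card_eq_coe_natCard, ← Nat.cast_mul, ENat.toNat_natCast]

end CompleteBipartite

end SimpleGraph

theorem stmt_19_general (n ν Δ : ℕ) (hΔν : 2 * ν + 1 ≤ Δ) (hnb : ν + Δ + 1 ≤ n) :
    (∀ G : SimpleGraph (Fin n),
      MatchingNumberLE G ν → MaxDegreeLE G Δ → eCount G ≤ ν * Δ) ∧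
    (∃ G : SimpleGraph (Fin n),
      MatchingNumberLE G ν ∧ MaxDegreeLE G Δ ∧ eCount G = ν * Δ) := by
  refine ⟨fun G hG hdeg => ?_, ?_⟩
  · have hν := matchingNumber_le_iff.mpr hG
    calc eCount G ≤ G.matchingNumber * Δ := G.eCount_le_matchingNumber_mul (by omega) hdeg
      _ ≤ ν * Δ := by gcongr
  · let f : Fin ν ⊕ Fin Δ ↪ Fin n :=
      finSumFinEquiv.toEmbedding.trans (Fin.castLEEmb (by omega))
    refine ⟨(completeBipartiteGraph (Fin ν) (Fin Δ)).map f, fun M hM hdisj => ?_,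
      (maxDegreeLE_completeBipartiteGraph (by rw [Nat.card_fin]; omega)
        (by rw [Nat.card_fin])).map f, ?_⟩
    · have := IsMatchingSet.card_le_ncard_of_isVertexCover ⟨hM, hdisj⟩
        (isVertexCover_completeBipartiteGraph_range_inl.map f) (Set.toFinite _)
      rwa [Set.ncard_image_of_injective _ f.injective,
        Set.ncard_range_of_injective Sum.inl_injective, Nat.card_fin] at this
    · rw [eCount_map, eCount_completeBipartiteGraph, Nat.card_fin, Nat.card_fin]

/-- Chvátal–Hanson, case `Δ ≥ 2ν + 1`, `n ≥ ν + Δ + 1`.  Let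
`n, ν, Δ` be positive integers with `Δ ≥ 2ν + 1` and `n ≥ ν + Δ + 1`.  Then the maximum
number of edges of an `n`-vertex graph with matching number at most `ν` and maximum
degree at most `Δ` equals `ν · Δ`. -/
theorem stmt_19 (n ν Δ : ℕ) (hn : 0 < n) (hν : 0 < ν) (hΔ : 0 < Δ)
    (hΔν : 2 * ν + 1 ≤ Δ) (hnb : ν + Δ + 1 ≤ n) :
    (∀ G : SimpleGraph (Fin n),
      MatchingNumberLE G ν → MaxDegreeLE G Δ → eCount G ≤ ν * Δ) ∧
    (∃ G : SimpleGraph (Fin n),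
      MatchingNumberLE G ν ∧ MaxDegreeLE G Δ ∧ eCount G = ν * Δ) :=
  stmt_19_general n ν Δ hΔν hnb
end
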